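/- arXiv:1612.04464 — 4 statements merged into one kernel-verified Lean document; each statement's English description precedes it below -/
import Mathlib

section
/- Let {φₙ}ₙ∈ℕ be an orthonormal basis of H, g ∈ H with ‖g‖ = 1, and consider the finite family Φ_N = {g, φ₁, …, φ_{N−1}}. The optimal Riesz bounds A_N, B_N of Φ_N (i.e., the extreme values of ‖c₀ g + ∑ₙ₌₁^{N−1} cₙφₙ‖² over unit coefficient vectors) are A_N = 1 − √(∑ₙ₌₁^{N−1} |⟨g, φₙ⟩|²) and B_N = 1 + √(∑ₙ₌₁^{N−1} |⟨g, φₙ⟩|²). -/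
/-!
Write `u = ∑ cᵢ φᵢ` and let `p = ∑ ⟪φᵢ, g⟫ φᵢ` be the projection of `g` onto the span of the
`φᵢ`, so that `⟪g, u⟫ = ⟪p, u⟫` and `‖p‖² = ∑ |⟪g, φᵢ⟫|²`. For `|c₀|² + ‖u‖² = 1` and `‖g‖ = 1`,
`‖c₀ g + u‖² = 1 + 2 Re (c̄₀ ⟪p, u⟫)`, and Cauchy–Schwarz with `2 |c₀| ‖u‖ ≤ |c₀|² + ‖u‖² = 1`
bounds the cross term by `‖p‖`. The bounds `1 ± ‖p‖` are attained at `c₀ = 1/√2`,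
`u = ± p / (√2 ‖p‖)` (or at `c₀ = 1`, `u = 0` when `p = 0`).
-/

open scoped InnerProductSpace ComplexConjugate
open RCLike

section

variable {𝕜 E ι : Type*} [RCLike 𝕜] [NormedAddCommGroup E] [InnerProductSpace 𝕜 E]

theorem norm_smul_add_sq_of_norm_eq_one {g : E} (hg : ‖g‖ = 1) (c₀ : 𝕜) (u : E) :
    ‖c₀ • g + u‖ ^ 2 = ‖c₀‖ ^ 2 + ‖u‖ ^ 2 + 2 * re (conj c₀ * ⟪g, u⟫_𝕜) := by
  rw [@norm_add_sq 𝕜, norm_smul, hg, mul_one, inner_smul_left]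
  ring

namespace Orthonormal

variable [Fintype ι] {v : ι → E}

theorem norm_sum_smul_sq (hv : Orthonormal 𝕜 v) (c : ι → 𝕜) :
    ‖∑ i, c i • v i‖ ^ 2 = ∑ i, ‖c i‖ ^ 2 := by
  rw [← inner_self_eq_norm_sq (𝕜 := 𝕜), hv.inner_sum, map_sum]
  simp_rw [RCLike.conj_mul, ← ofReal_pow, ofReal_re]

theorem inner_eq_inner_sum_inner_smul (hv : Orthonormal 𝕜 v) (g : E) (c : ι → 𝕜) :
    ⟪g, ∑ i, c i • v i⟫_𝕜 = ⟪∑ i, ⟪v i, g⟫_𝕜 • v i, ∑ i, c i • v i⟫_𝕜 := by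
  simp_rw [hv.inner_sum, inner_conj_symm, inner_sum, inner_smul_right, mul_comm]

theorem norm_sum_inner_smul (hv : Orthonormal 𝕜 v) (g : E) :
    ‖∑ i, ⟪v i, g⟫_𝕜 • v i‖ = √(∑ i, ‖⟪g, v i⟫_𝕜‖ ^ 2) := by
  rw [← Real.sqrt_sq (norm_nonneg (∑ i, ⟪v i, g⟫_𝕜 • v i)), hv.norm_sum_smul_sq]
  simp_rw [norm_inner_symm]

variable {g : E}

theorem abs_norm_smul_add_sum_smul_sq_sub_one_le (hv : Orthonormal 𝕜 v) (hg : ‖g‖ = 1)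
    {c₀ : 𝕜} {c : ι → 𝕜} (hc : ‖c₀‖ ^ 2 + ∑ i, ‖c i‖ ^ 2 = 1) :
    |‖c₀ • g + ∑ i, c i • v i‖ ^ 2 - 1| ≤ ‖∑ i, ⟪v i, g⟫_𝕜 • v i‖ := by
  set p := ∑ i, ⟪v i, g⟫_𝕜 • v i
  set u := ∑ i, c i • v i
  have hu : ‖c₀‖ ^ 2 + ‖u‖ ^ 2 = 1 := by rw [hv.norm_sum_smul_sq, hc]
  rw [norm_smul_add_sq_of_norm_eq_one hg, hu, add_sub_cancel_left, abs_mul, abs_two,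
    hv.inner_eq_inner_sum_inner_smul]
  calc 2 * |re (conj c₀ * ⟪p, u⟫_𝕜)|
      ≤ 2 * (‖c₀‖ * (‖p‖ * ‖u‖)) := by
        gcongr
        refine (abs_re_le_norm _).trans ?_
        rw [norm_mul, norm_conj]
        gcongr
        exact norm_inner_le_norm p u
    _ = ‖p‖ * (2 * ‖c₀‖ * ‖u‖) := by ring
    _ ≤ ‖p‖ * (‖c₀‖ ^ 2 + ‖u‖ ^ 2) := by gcongr; exact two_mul_le_add_sq _ _
    _ = ‖p‖ := by rw [hu, mul_one]

theorem exists_norm_smul_add_sum_smul_sq_eq (hv : Orthonormal 𝕜 v) (hg : ‖g‖ = 1)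
    {ε : ℝ} (hε : ε ^ 2 = 1) :
    ∃ (c₀ : 𝕜) (c : ι → 𝕜), ‖c₀‖ ^ 2 + ∑ i, ‖c i‖ ^ 2 = 1 ∧
      ‖c₀ • g + ∑ i, c i • v i‖ ^ 2 = 1 + ε * ‖∑ i, ⟪v i, g⟫_𝕜 • v i‖ := by
  set p := ∑ i, ⟪v i, g⟫_𝕜 • v i
  rcases (norm_nonneg p).eq_or_lt with hp | hp
  · refine ⟨1, 0, by simp, ?_⟩
    simp [← hp, hg]
  set t : ℝ := ε / (√2 * ‖p‖)
  set c : ι → 𝕜 := fun i => (t : 𝕜) * ⟪v i, g⟫_𝕜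
  have hsum : ∑ i, c i • v i = (t : 𝕜) • p := by
    rw [Finset.smul_sum]; simp_rw [c, smul_smul]
  have hsqrt2 : √2 ^ 2 = 2 := Real.sq_sqrt zero_le_two
  have htp : ‖(t : 𝕜) • p‖ ^ 2 = 1 / 2 := by
    rw [norm_smul, norm_ofReal, mul_pow, sq_abs, div_pow, mul_pow, hsqrt2, hε]
    field_simp
  have hc₀ : ‖(((√2)⁻¹ : ℝ) : 𝕜)‖ ^ 2 = 1 / 2 := by
    rw [norm_ofReal, sq_abs, inv_pow, hsqrt2, one_div]
  refine ⟨((√2)⁻¹ : ℝ), c, ?_, ?_⟩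
  · rw [← hv.norm_sum_smul_sq, hsum, hc₀, htp]; norm_num
  · rw [norm_smul_add_sq_of_norm_eq_one hg, hv.inner_eq_inner_sum_inner_smul, hsum, hc₀, htp,
      inner_smul_right, inner_self_eq_norm_sq_to_K, conj_ofReal, ← ofReal_pow, ← ofReal_mul,
      ← ofReal_mul, ofReal_re]
    simp only [t, p]
    field_simp
    rw [hsqrt2]
    ring

end Orthonormal

end

theorem stmt_8_general {H : Type*} [NormedAddCommGroup H] [InnerProductSpace ℂ H]
    (b : HilbertBasis ℕ ℂ H) (g : H) (hg : ‖g‖ = 1) (N : ℕ) :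
    IsLeast {r : ℝ | ∃ (c₀ : ℂ) (c : Fin (N - 1) → ℂ),
        ‖c₀‖ ^ 2 + ∑ i, ‖c i‖ ^ 2 = 1 ∧
        r = ‖c₀ • g + ∑ i : Fin (N - 1), c i • b (i : ℕ)‖ ^ 2}
      (1 - Real.sqrt (∑ i : Fin (N - 1), ‖⟪g, b (i : ℕ)⟫_ℂ‖ ^ 2)) ∧
    IsGreatest {r : ℝ | ∃ (c₀ : ℂ) (c : Fin (N - 1) → ℂ),
        ‖c₀‖ ^ 2 + ∑ i, ‖c i‖ ^ 2 = 1 ∧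
        r = ‖c₀ • g + ∑ i : Fin (N - 1), c i • b (i : ℕ)‖ ^ 2}
      (1 + Real.sqrt (∑ i : Fin (N - 1), ‖⟪g, b (i : ℕ)⟫_ℂ‖ ^ 2)) := by
  have hv : Orthonormal ℂ fun i : Fin (N - 1) => b i := b.orthonormal.comp _ Fin.val_injective
  rw [← hv.norm_sum_inner_smul g]
  refine ⟨⟨?_, ?_⟩, ⟨?_, ?_⟩⟩
  · obtain ⟨c₀, c, hc, h⟩ := hv.exists_norm_smul_add_sum_smul_sq_eq hg (ε := -1) (by norm_num)
    exact ⟨c₀, c, hc, by rw [h]; ring⟩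
  · rintro _ ⟨c₀, c, hc, rfl⟩
    linarith [abs_le.mp (hv.abs_norm_smul_add_sum_smul_sq_sub_one_le hg hc)]
  · obtain ⟨c₀, c, hc, h⟩ := hv.exists_norm_smul_add_sum_smul_sq_eq hg (ε := 1) (by norm_num)
    exact ⟨c₀, c, hc, by rw [h, one_mul]⟩
  · rintro _ ⟨c₀, c, hc, rfl⟩
    linarith [abs_le.mp (hv.abs_norm_smul_add_sum_smul_sq_sub_one_le hg hc)]

/-- Exact Riesz bounds of the finite family `{g, φ₁, …, φ_{N−1}}` obtained by augmenting an
orthonormal basis with a unit vector `g`: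
`A_N = 1 − √(∑_{n<N−1} |⟨g,φₙ⟩|²)` and `B_N = 1 + √(∑_{n<N−1} |⟨g,φₙ⟩|²)`. -/
theorem stmt_8 {H : Type*} [NormedAddCommGroup H] [InnerProductSpace ℂ H]
    [CompleteSpace H] (b : HilbertBasis ℕ ℂ H) (g : H) (hg : ‖g‖ = 1)
    (hinf : {n : ℕ | ⟪g, b n⟫_ℂ ≠ 0}.Infinite) (N : ℕ) (hN : 0 < N) :
    IsLeast {r : ℝ | ∃ (c₀ : ℂ) (c : Fin (N - 1) → ℂ),
        ‖c₀‖ ^ 2 + ∑ i, ‖c i‖ ^ 2 = 1 ∧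
        r = ‖c₀ • g + ∑ i : Fin (N - 1), c i • b (i : ℕ)‖ ^ 2}
      (1 - Real.sqrt (∑ i : Fin (N - 1), ‖⟪g, b (i : ℕ)⟫_ℂ‖ ^ 2)) ∧
    IsGreatest {r : ℝ | ∃ (c₀ : ℂ) (c : Fin (N - 1) → ℂ),
        ‖c₀‖ ^ 2 + ∑ i, ‖c i‖ ^ 2 = 1 ∧
        r = ‖c₀ • g + ∑ i : Fin (N - 1), c i • b (i : ℕ)‖ ^ 2}
      (1 + Real.sqrt (∑ i : Fin (N - 1), ‖⟪g, b (i : ℕ)⟫_ℂ‖ ^ 2)) :=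
  stmt_8_general b g hg N
end

section
/- (Error bound for truncated SVD frame projection.) With notation as above, the truncated SVD projection satisfies ‖f − P_N^ε f‖ ≤ inf{ ‖f − T_N z‖ + √ε ‖z‖ : z ∈ ℂᴺ } for every f ∈ H. -/
open scoped InnerProductSpace

/-!
The vectors `ξ k = T (v k)` are orthogonal with `‖ξ k‖² = σ k`, so the truncated sum is the
orthogonal projection of `f` onto `span {ξ k : ε < σ k}`. Writing `T z = ∑ c k • ξ k` with
`c k = ⟪v k, z⟫`, the projection is therefore at least as close to `f` as
`∑_{ε < σ k} c k • ξ k`, which differs from `T z` by the discarded part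
`∑_{σ k ≤ ε} c k • ξ k`, of squared norm `∑_{σ k ≤ ε} |c k|² σ k ≤ ε ‖z‖²`.
-/

section DiagonalGram

variable {𝕜 E ι : Type*} [RCLike 𝕜] [NormedAddCommGroup E] [InnerProductSpace 𝕜 E]
  {ξ : ι → E} {σ : ι → ℝ}

theorem norm_sub_le_norm_sub_of_inner_eq_zero {f p g : E} (h : ⟪f - p, p - g⟫_𝕜 = 0) :
    ‖f - p‖ ≤ ‖f - g‖ := by
  have hpyth := norm_add_sq_eq_norm_sq_add_norm_sq_of_inner_eq_zero _ _ h
  rw [sub_add_sub_cancel] at hpyth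
  nlinarith [norm_nonneg (f - p), norm_nonneg (f - g), mul_self_nonneg ‖p - g‖]

variable [DecidableEq ι] (hξ : ∀ j k, ⟪ξ j, ξ k⟫_𝕜 = if j = k then (σ k : 𝕜) else 0)
include hξ

theorem inner_sum_smul_of_diag {A : Finset ι} {j : ι} (hj : j ∈ A) (a : ι → 𝕜) :
    ⟪ξ j, ∑ k ∈ A, a k • ξ k⟫_𝕜 = a j * σ j := by
  simp [inner_sum, inner_smul_right, hξ, hj]

theorem norm_sum_smul_sq_of_diag (A : Finset ι) (a : ι → 𝕜) :
    ‖∑ k ∈ A, a k • ξ k‖ ^ 2 = ∑ k ∈ A, ‖a k‖ ^ 2 * σ k := by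
  rw [@norm_sq_eq_re_inner 𝕜, sum_inner, map_sum]
  refine Finset.sum_congr rfl fun k hk => ?_
  rw [inner_smul_left, inner_sum_smul_of_diag hξ hk, ← mul_assoc, RCLike.conj_mul]
  norm_cast

theorem inner_sub_sum_inv_smul_eq_zero_of_diag {S : Finset ι} {j : ι} (hj : j ∈ S) (f : E) :
    ⟪ξ j, f - ∑ k ∈ S, ((σ k : 𝕜)⁻¹ * ⟪ξ k, f⟫_𝕜) • ξ k⟫_𝕜 = 0 := by
  rw [inner_sub_right, inner_sum_smul_of_diag hξ hj]
  by_cases hσ : σ j = 0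
  · have : ξ j = 0 := inner_self_eq_zero.mp (by rw [hξ, if_pos rfl, hσ, RCLike.ofReal_zero])
    simp [this]
  · rw [mul_right_comm, inv_mul_cancel₀ (RCLike.ofReal_ne_zero.mpr hσ), one_mul, sub_self]

theorem norm_sub_sum_inv_smul_le_of_diag (S : Finset ι) (f : E) (a : ι → 𝕜) :
    ‖f - ∑ k ∈ S, ((σ k : 𝕜)⁻¹ * ⟪ξ k, f⟫_𝕜) • ξ k‖ ≤ ‖f - ∑ k ∈ S, a k • ξ k‖ := by
  refine norm_sub_le_norm_sub_of_inner_eq_zero (𝕜 := 𝕜) ?_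
  rw [← Finset.sum_sub_distrib, inner_sum]
  refine Finset.sum_eq_zero fun k hk => ?_
  rw [← sub_smul, inner_smul_right,
    inner_eq_zero_symm.mp (inner_sub_sum_inv_smul_eq_zero_of_diag hξ hk f), mul_zero]

theorem norm_sum_smul_le_of_diag {A : Finset ι} {ε : ℝ} (hA : ∀ k ∈ A, σ k ≤ ε) (a : ι → 𝕜) :
    ‖∑ k ∈ A, a k • ξ k‖ ≤ √ε * √(∑ k ∈ A, ‖a k‖ ^ 2) := by
  rw [← Real.sqrt_mul' _ (by positivity), ← Real.sqrt_sq (norm_nonneg _),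
    norm_sum_smul_sq_of_diag hξ, Finset.mul_sum]
  refine Real.sqrt_le_sqrt (Finset.sum_le_sum fun k hk => ?_)
  rw [mul_comm ε]
  exact mul_le_mul_of_nonneg_left (hA k hk) (by positivity)

theorem norm_sub_sum_filter_inv_smul_le_of_diag [Fintype ι] (ε : ℝ) (f : E) (a : ι → 𝕜) :
    ‖f - ∑ k with ε < σ k, ((σ k : 𝕜)⁻¹ * ⟪ξ k, f⟫_𝕜) • ξ k‖ ≤
      ‖f - ∑ k, a k • ξ k‖ + √ε * √(∑ k, ‖a k‖ ^ 2) := by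
  have htail : ‖∑ k with ¬ε < σ k, a k • ξ k‖ ≤ √ε * √(∑ k, ‖a k‖ ^ 2) := by
    refine (norm_sum_smul_le_of_diag hξ
      (fun k hk => not_lt.mp (Finset.mem_filter.mp hk).2) a).trans ?_
    gcongr
    exact Finset.filter_subset _ _
  have hsplit : f - ∑ k with ε < σ k, a k • ξ k =
      (f - ∑ k, a k • ξ k) + ∑ k with ¬ε < σ k, a k • ξ k := by
    rw [← Finset.sum_filter_add_sum_filter_not Finset.univ (fun k => ε < σ k)]
    abel
  calc _ ≤ ‖f - ∑ k with ε < σ k, a k • ξ k‖ := norm_sub_sum_inv_smul_le_of_diag hξ _ f a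
    _ = ‖(f - ∑ k, a k • ξ k) + ∑ k with ¬ε < σ k, a k • ξ k‖ := by rw [hsplit]
    _ ≤ _ := (norm_add_le _ _).trans (by gcongr)

end DiagonalGram

theorem Matrix.inner_toEuclideanCLM_gram {𝕜 E ι : Type*} [RCLike 𝕜] [NormedAddCommGroup E]
    [InnerProductSpace 𝕜 E] [Fintype ι] [DecidableEq ι] (φ : ι → E)
    (x y : EuclideanSpace 𝕜 ι) :
    ⟪x, Matrix.toEuclideanCLM (𝕜 := 𝕜) (Matrix.gram 𝕜 φ) y⟫_𝕜 =
      ⟪∑ i, x i • φ i, ∑ i, y i • φ i⟫_𝕜 := by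
  rw [EuclideanSpace.inner_eq_star_dotProduct, Matrix.ofLp_toEuclideanCLM, dotProduct_comm,
    Matrix.star_dotProduct_gram_mulVec]

theorem stmt_13_general {H : Type*} [NormedAddCommGroup H] [InnerProductSpace ℂ H]
    {N : ℕ} (φ : Fin N → H)
    (T : EuclideanSpace ℂ (Fin N) →ₗ[ℂ] H)
    (hT : ∀ x : EuclideanSpace ℂ (Fin N), T x = ∑ n, x n • φ n)
    (G : Matrix (Fin N) (Fin N) ℂ) (hGdef : ∀ n m, G n m = ⟪φ n, φ m⟫_ℂ)
    (σ : Fin N → ℝ)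
    (v : Fin N → EuclideanSpace ℂ (Fin N)) (hv : Orthonormal ℂ v)
    (heig : ∀ k, Matrix.toEuclideanCLM (𝕜 := ℂ) G (v k) = (σ k : ℂ) • v k)
    (ξ : Fin N → H) (hξ : ∀ k, ξ k = ∑ n, v k n • φ n)
    (ε : ℝ) (f : H) :
    ∀ z : EuclideanSpace ℂ (Fin N),
      ‖f - ∑ k ∈ Finset.univ.filter (fun k => ε < σ k),
          ((σ k : ℂ)⁻¹ * ⟪ξ k, f⟫_ℂ) • ξ k‖ ≤
        ‖f - T z‖ + Real.sqrt ε * ‖z‖ := by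
  intro z
  have hG : G = Matrix.gram ℂ φ := Matrix.ext hGdef
  have hTv : ∀ k, T (v k) = ξ k := fun k => by rw [hT, hξ]
  have hdiag : ∀ j k, ⟪ξ j, ξ k⟫_ℂ = if j = k then (σ k : ℂ) else 0 := fun j k => by
    rw [← hTv, ← hTv, hT, hT, ← Matrix.inner_toEuclideanCLM_gram, ← hG, heig, inner_smul_right,
      orthonormal_iff_ite.mp hv]
    split_ifs <;> simp
  let b := OrthonormalBasis.mk hv
    (hv.linearIndependent.span_eq_top_of_card_eq_finrank' (by simp)).ge
  have hb : ⇑b = v := OrthonormalBasis.coe_mk hv _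
  have hTz : T z = ∑ k, ⟪v k, z⟫_ℂ • ξ k := by
    conv_lhs => rw [← b.sum_repr' z]
    simp [hb, hTv]
  have hz : √(∑ k, ‖⟪v k, z⟫_ℂ‖ ^ 2) = ‖z‖ := by
    rw [← hb, b.sum_sq_norm_inner_right, Real.sqrt_sq (norm_nonneg z)]
  rw [hTz, ← hz]
  exact norm_sub_sum_filter_inv_smul_le_of_diag hdiag ε f _

/-- Error bound for the truncated SVD frame projection:
`‖f − P_N^ε f‖ ≤ inf{ ‖f − T_N z‖ + √ε ‖z‖ : z ∈ ℂᴺ }`. -/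
theorem stmt_13 {H : Type*} [NormedAddCommGroup H] [InnerProductSpace ℂ H]
    {N : ℕ} (φ : Fin N → H) (hφ : LinearIndependent ℂ φ)
    (T : EuclideanSpace ℂ (Fin N) →ₗ[ℂ] H)
    (hT : ∀ x : EuclideanSpace ℂ (Fin N), T x = ∑ n, x n • φ n)
    (G : Matrix (Fin N) (Fin N) ℂ) (hGdef : ∀ n m, G n m = ⟪φ n, φ m⟫_ℂ)
    (σ : Fin N → ℝ) (hσ : ∀ k, 0 < σ k)
    (v : Fin N → EuclideanSpace ℂ (Fin N)) (hv : Orthonormal ℂ v)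
    (heig : ∀ k, Matrix.toEuclideanCLM (𝕜 := ℂ) G (v k) = (σ k : ℂ) • v k)
    (ξ : Fin N → H) (hξ : ∀ k, ξ k = ∑ n, v k n • φ n)
    (ε : ℝ) (hε : 0 < ε) (f : H) :
    ∀ z : EuclideanSpace ℂ (Fin N),
      ‖f - ∑ k ∈ Finset.univ.filter (fun k => ε < σ k),
          ((σ k : ℂ)⁻¹ * ⟪ξ k, f⟫_ℂ) • ξ k‖ ≤
        ‖f - T z‖ + Real.sqrt ε * ‖z‖ :=
  stmt_13_general φ T hT G hGdef σ v hv heig ξ hξ ε f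
end

section
/- (Coefficient bound for truncated SVD frame projection.) With notation as above, the regularized coefficient vector x^ε = ∑_{σ_k > ε} (⟨f, ξ_k⟩/σ_k) v_k satisfies ‖x^ε‖ ≤ inf{ ε^{−1/2} ‖f − T_N z‖ + ‖z‖ : z ∈ ℂᴺ } for every f ∈ H. -/
/-!
Since `⟪ξ_k, T z⟫ = σ_k ⟪v_k, z⟫`, the truncated coefficient vector splits as
`∑_{σ_k > ε} σ_k⁻¹ ⟪ξ_k, f - T z⟫ v_k + ∑_{σ_k > ε} ⟪v_k, z⟫ v_k`.
The second sum is an orthogonal projection of `z`, so its norm is at most `‖z‖`.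
The `ξ_k` are orthogonal with `‖ξ_k‖² = σ_k`, so the squared norm of the first sum is
`∑ σ_k⁻¹ |⟪ξ_k, f - T z⟫|² / ‖ξ_k‖² ≤ ε⁻¹ ‖f - T z‖²` by Bessel's inequality.
-/

open scoped InnerProductSpace

section
variable {𝕜 E ι : Type*} [RCLike 𝕜] [NormedAddCommGroup E] [InnerProductSpace 𝕜 E]

theorem Orthonormal.norm_sum_smul_sq_s14 {v : ι → E} (hv : Orthonormal 𝕜 v) (s : Finset ι)
    (c : ι → 𝕜) : ‖∑ i ∈ s, c i • v i‖ ^ 2 = ∑ i ∈ s, ‖c i‖ ^ 2 := by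
  have : ((‖∑ i ∈ s, c i • v i‖ : ℝ) : 𝕜) ^ 2 = ∑ i ∈ s, ((‖c i‖ : ℝ) : 𝕜) ^ 2 := by
    simp only [← inner_self_eq_norm_sq_to_K, hv.inner_sum, RCLike.conj_mul]
  exact_mod_cast this

theorem Orthonormal.norm_sum_inner_smul_le {v : ι → E} (hv : Orthonormal 𝕜 v) (s : Finset ι)
    (x : E) : ‖∑ i ∈ s, ⟪v i, x⟫_𝕜 • v i‖ ≤ ‖x‖ := by
  refine le_of_sq_le_sq ?_ (norm_nonneg x)
  rw [hv.norm_sum_smul_sq_s14]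
  exact hv.sum_inner_products_le x

/-- Bessel's inequality for an orthogonal family that need not be normalized. -/
theorem sum_norm_inner_sq_div_le_of_pairwise_inner_eq_zero {ξ : ι → E}
    (hξ : Pairwise fun i j => ⟪ξ i, ξ j⟫_𝕜 = 0) (s : Finset ι) (x : E) :
    ∑ i ∈ s, ‖⟪ξ i, x⟫_𝕜‖ ^ 2 / ‖ξ i‖ ^ 2 ≤ ‖x‖ ^ 2 := by
  classical
  let u : {i // ξ i ≠ 0} → E := fun i => ((‖ξ i‖ : 𝕜)⁻¹) • ξ i
  have hu : Orthonormal 𝕜 u := by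
    refine ⟨fun i => ?_, fun i j hij => ?_⟩
    · simp [u, norm_smul, inv_mul_cancel₀ (norm_ne_zero_iff.mpr i.2)]
    · simp [u, inner_smul_left, inner_smul_right, hξ (Subtype.coe_ne_coe.mpr hij)]
  have hterm : ∀ i : {i // ξ i ≠ 0}, ‖⟪u i, x⟫_𝕜‖ ^ 2 = ‖⟪ξ i, x⟫_𝕜‖ ^ 2 / ‖ξ i‖ ^ 2 := by
    intro i
    simp [u, inner_smul_left, norm_mul, mul_pow, div_eq_inv_mul]
  calc ∑ i ∈ s, ‖⟪ξ i, x⟫_𝕜‖ ^ 2 / ‖ξ i‖ ^ 2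
      = ∑ i ∈ s.subtype (fun i => ξ i ≠ 0), ‖⟪u i, x⟫_𝕜‖ ^ 2 := by
        simp_rw [hterm]
        rw [Finset.sum_subtype_eq_sum_filter (fun i => ‖⟪ξ i, x⟫_𝕜‖ ^ 2 / ‖ξ i‖ ^ 2),
          Finset.sum_filter_of_ne]
        intro i _ hi hξi
        simp [hξi] at hi
    _ ≤ ‖x‖ ^ 2 := hu.sum_inner_products_le x

theorem Orthonormal.norm_sum_inv_norm_sq_mul_inner_smul_le {F : Type*} [NormedAddCommGroup F]
    [InnerProductSpace 𝕜 F] {v : ι → E} (hv : Orthonormal 𝕜 v) {ξ : ι → F}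
    (hξ : Pairwise fun i j => ⟪ξ i, ξ j⟫_𝕜 = 0) {ε : ℝ} (hε : 0 < ε) {s : Finset ι}
    (hs : ∀ i ∈ s, ε < ‖ξ i‖ ^ 2) (x : F) :
    ‖∑ i ∈ s, (((‖ξ i‖ ^ 2 : ℝ) : 𝕜)⁻¹ * ⟪ξ i, x⟫_𝕜) • v i‖ ≤ (√ε)⁻¹ * ‖x‖ := by
  refine le_of_sq_le_sq ?_ (by positivity)
  rw [hv.norm_sum_smul_sq_s14, mul_pow, inv_pow, Real.sq_sqrt hε.le]
  calc ∑ i ∈ s, ‖((‖ξ i‖ ^ 2 : ℝ) : 𝕜)⁻¹ * ⟪ξ i, x⟫_𝕜‖ ^ 2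
      = ∑ i ∈ s, (‖ξ i‖ ^ 2)⁻¹ * (‖⟪ξ i, x⟫_𝕜‖ ^ 2 / ‖ξ i‖ ^ 2) := by
        refine Finset.sum_congr rfl fun i _ => ?_
        rw [norm_mul, norm_inv, RCLike.norm_ofReal, abs_of_nonneg (by positivity)]
        ring
    _ ≤ ∑ i ∈ s, ε⁻¹ * (‖⟪ξ i, x⟫_𝕜‖ ^ 2 / ‖ξ i‖ ^ 2) := by
        gcongr with i hi
        exact (hs i hi).le
    _ ≤ ε⁻¹ * ‖x‖ ^ 2 := by
        rw [← Finset.mul_sum]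
        gcongr
        exact sum_norm_inner_sq_div_le_of_pairwise_inner_eq_zero hξ s x

section Gram
variable {n : Type*} [Fintype n] [DecidableEq n] {φ : n → E}

theorem inner_sum_smul_sum_smul_eq_inner_toEuclideanCLM_gram (w u : EuclideanSpace 𝕜 n) :
    ⟪∑ i, w i • φ i, ∑ i, u i • φ i⟫_𝕜 =
      ⟪w, Matrix.toEuclideanCLM (𝕜 := 𝕜) (Matrix.gram 𝕜 φ) u⟫_𝕜 := by
  rw [← Matrix.star_dotProduct_gram_mulVec, EuclideanSpace.inner_eq_star_dotProduct,
    Matrix.ofLp_toEuclideanCLM, dotProduct_comm]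

theorem inner_sum_smul_eq_mul_inner_of_gram_eigen {u : EuclideanSpace 𝕜 n} {σ : ℝ}
    (hu : Matrix.toEuclideanCLM (𝕜 := 𝕜) (Matrix.gram 𝕜 φ) u = (σ : 𝕜) • u)
    (w : EuclideanSpace 𝕜 n) :
    ⟪∑ i, w i • φ i, ∑ i, u i • φ i⟫_𝕜 = σ * ⟪w, u⟫_𝕜 := by
  rw [inner_sum_smul_sum_smul_eq_inner_toEuclideanCLM_gram, hu, inner_smul_right]

theorem norm_sum_smul_sq_of_gram_eigen {u : EuclideanSpace 𝕜 n} {σ : ℝ}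
    (hu : Matrix.toEuclideanCLM (𝕜 := 𝕜) (Matrix.gram 𝕜 φ) u = (σ : 𝕜) • u) (hu_norm : ‖u‖ = 1) :
    ‖∑ i, u i • φ i‖ ^ 2 = σ := by
  rw [norm_sq_eq_re_inner (𝕜 := 𝕜), inner_sum_smul_eq_mul_inner_of_gram_eigen hu,
    inner_self_eq_norm_sq_to_K, hu_norm]
  simp

theorem pairwise_inner_sum_smul_eq_zero_of_gram_eigen {v : ι → EuclideanSpace 𝕜 n}
    (hv : Orthonormal 𝕜 v) {σ : ι → ℝ}
    (hσ : ∀ k, Matrix.toEuclideanCLM (𝕜 := 𝕜) (Matrix.gram 𝕜 φ) (v k) = (σ k : 𝕜) • v k) :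
    Pairwise fun k j => ⟪∑ i, v k i • φ i, ∑ i, v j i • φ i⟫_𝕜 = 0 := fun k j hkj =>
  (inner_sum_smul_eq_mul_inner_of_gram_eigen (hσ j) (v k)).trans
    (by rw [hv.inner_eq_zero hkj, mul_zero])

end Gram
end

theorem stmt_14_general {H : Type*} [NormedAddCommGroup H] [InnerProductSpace ℂ H]
    {N : ℕ} (φ : Fin N → H)
    (T : EuclideanSpace ℂ (Fin N) →ₗ[ℂ] H)
    (hT : ∀ x : EuclideanSpace ℂ (Fin N), T x = ∑ n, x n • φ n)
    (G : Matrix (Fin N) (Fin N) ℂ) (hGdef : ∀ n m, G n m = ⟪φ n, φ m⟫_ℂ)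
    (σ : Fin N → ℝ)
    (v : Fin N → EuclideanSpace ℂ (Fin N)) (hv : Orthonormal ℂ v)
    (heig : ∀ k, Matrix.toEuclideanCLM (𝕜 := ℂ) G (v k) = (σ k : ℂ) • v k)
    (ξ : Fin N → H) (hξ : ∀ k, ξ k = ∑ n, v k n • φ n)
    (ε : ℝ) (hε : 0 < ε) (f : H) :
    ∀ z : EuclideanSpace ℂ (Fin N),
      ‖∑ k ∈ Finset.univ.filter (fun k => ε < σ k),
          ((σ k : ℂ)⁻¹ * ⟪ξ k, f⟫_ℂ) • v k‖ ≤
        (Real.sqrt ε)⁻¹ * ‖f - T z‖ + ‖z‖ := by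
  intro z
  obtain rfl : G = Matrix.gram ℂ φ := Matrix.ext hGdef
  have hξ_norm (k : Fin N) : ‖ξ k‖ ^ 2 = σ k :=
    hξ k ▸ norm_sum_smul_sq_of_gram_eigen (heig k) (hv.norm_eq_one k)
  have hξ_orth : Pairwise fun k j => ⟪ξ k, ξ j⟫_ℂ = 0 := by
    simpa only [hξ] using pairwise_inner_sum_smul_eq_zero_of_gram_eigen hv heig
  have hcoef (k : Fin N) (hk : ε < σ k) : (σ k : ℂ)⁻¹ * ⟪ξ k, f⟫_ℂ =
      ((‖ξ k‖ ^ 2 : ℝ) : ℂ)⁻¹ * ⟪ξ k, f - T z⟫_ℂ + ⟪v k, z⟫_ℂ := by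
    have hσk : (σ k : ℂ) ≠ 0 := by exact_mod_cast (hε.trans hk).ne'
    have hξT : ⟪ξ k, T z⟫_ℂ = σ k * ⟪v k, z⟫_ℂ := by
      rw [← inner_conj_symm, hT, hξ, inner_sum_smul_eq_mul_inner_of_gram_eigen (heig k)]
      simp
    rw [hξ_norm, inner_sub_right, hξT]
    field_simp
    ring
  rw [Finset.sum_congr rfl fun k hk => by rw [hcoef k (Finset.mem_filter.mp hk).2, add_smul],
    Finset.sum_add_distrib]
  refine (norm_add_le _ _).trans (add_le_add ?_ (hv.norm_sum_inner_smul_le _ z))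
  refine hv.norm_sum_inv_norm_sq_mul_inner_smul_le hξ_orth hε (fun k hk => ?_) _
  rw [hξ_norm]
  exact (Finset.mem_filter.mp hk).2

/-- Coefficient bound for the truncated SVD frame projection: the regularized coefficient
vector `x^ε = ∑_{σ_k>ε} σ_k⁻¹ ⟨f, ξ_k⟩ v_k` satisfies
`‖x^ε‖ ≤ inf{ ε^{−1/2} ‖f − T_N z‖ + ‖z‖ : z ∈ ℂᴺ }`. -/
theorem stmt_14 {H : Type*} [NormedAddCommGroup H] [InnerProductSpace ℂ H]
    {N : ℕ} (φ : Fin N → H) (hφ : LinearIndependent ℂ φ)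
    (T : EuclideanSpace ℂ (Fin N) →ₗ[ℂ] H)
    (hT : ∀ x : EuclideanSpace ℂ (Fin N), T x = ∑ n, x n • φ n)
    (G : Matrix (Fin N) (Fin N) ℂ) (hGdef : ∀ n m, G n m = ⟪φ n, φ m⟫_ℂ)
    (σ : Fin N → ℝ) (hσ : ∀ k, 0 < σ k)
    (v : Fin N → EuclideanSpace ℂ (Fin N)) (hv : Orthonormal ℂ v)
    (heig : ∀ k, Matrix.toEuclideanCLM (𝕜 := ℂ) G (v k) = (σ k : ℂ) • v k)
    (ξ : Fin N → H) (hξ : ∀ k, ξ k = ∑ n, v k n • φ n)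
    (ε : ℝ) (hε : 0 < ε) (f : H) :
    ∀ z : EuclideanSpace ℂ (Fin N),
      ‖∑ k ∈ Finset.univ.filter (fun k => ε < σ k),
          ((σ k : ℂ)⁻¹ * ⟪ξ k, f⟫_ℂ) • v k‖ ≤
        (Real.sqrt ε)⁻¹ * ‖f - T z‖ + ‖z‖ :=
  stmt_14_general φ T hT G hGdef σ v hv heig ξ hξ ε hε f
end

section
/- (Condition number of the regularized frame approximation map.) The absolute condition number κ = max{‖T_N (G_N^ε)† y‖ : y ∈ ℂᴺ, ‖y‖ = 1} of the linear map y ↦ T_N (G_N^ε)† y satisfies κ = 1/√(min{σ_k : σ_k > ε}), and hence κ ≤ min{ 1/√σ_min(G_N), 1/√ε }. -/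
open scoped InnerProductSpace

/-!
Expanding `y` in the eigenbasis of the Gram matrix, the vectors `ξ k = T_N v_k` are pairwise
orthogonal with `‖ξ k‖² = σ_k`, so `‖T_N (G_N^ε)† y‖² = ∑_{σ_k > ε} |⟨v_k, y⟩|² / σ_k`.
By Bessel's inequality this is at most `1 / min_{σ_k > ε} σ_k` on the unit sphere, with equality
at the eigenvector of that smallest retained eigenvalue.
-/

section

variable {𝕜 E ι : Type*} [RCLike 𝕜] [NormedAddCommGroup E] [InnerProductSpace 𝕜 E]

theorem inner_sum_smul_eq_inner_toEuclideanCLM_gram [Fintype ι] [DecidableEq ι] (φ : ι → E)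
    (x y : EuclideanSpace 𝕜 ι) :
    ⟪∑ i, x i • φ i, ∑ i, y i • φ i⟫_𝕜 =
      ⟪x, Matrix.toEuclideanCLM (𝕜 := 𝕜) (Matrix.gram 𝕜 φ) y⟫_𝕜 := by
  rw [EuclideanSpace.inner_eq_star_dotProduct, Matrix.ofLp_toEuclideanCLM, dotProduct_comm,
    Matrix.star_dotProduct_gram_mulVec]

theorem Orthonormal.inner_eq_ite_of_apply_eq_smul [DecidableEq ι] {v : ι → E}
    (hv : Orthonormal 𝕜 v) {A : E → E} {σ : ι → ℝ} (hA : ∀ k, A (v k) = (σ k : 𝕜) • v k) (j k : ι) :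
    ⟪v j, A (v k)⟫_𝕜 = if j = k then (σ k : 𝕜) else 0 := by
  rw [hA, inner_smul_right, orthonormal_iff_ite.mp hv]
  split_ifs <;> simp

theorem norm_sum_smul_sq_of_inner_eq_ite [DecidableEq ι] {ξ : ι → E} {σ : ι → ℝ}
    (hξ : ∀ j k, ⟪ξ j, ξ k⟫_𝕜 = if j = k then (σ k : 𝕜) else 0) (s : Finset ι) (c : ι → 𝕜) :
    ‖∑ k ∈ s, c k • ξ k‖ ^ 2 = ∑ k ∈ s, ‖c k‖ ^ 2 * σ k := by
  have hdiag : ∀ j ∈ s, ⟪c j • ξ j, ∑ k ∈ s, c k • ξ k⟫_𝕜 = ((‖c j‖ ^ 2 * σ j : ℝ) : 𝕜) := by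
    intro j hj
    simp only [inner_sum, inner_smul_left, inner_smul_right, hξ, mul_ite, mul_zero,
      Finset.sum_ite_eq, if_pos hj]
    rw [← mul_assoc, RCLike.mul_conj]
    push_cast
    ring
  rw [← RCLike.ofReal_inj (K := 𝕜), RCLike.ofReal_pow, ← inner_self_eq_norm_sq_to_K, sum_inner,
    Finset.sum_congr rfl hdiag, RCLike.ofReal_sum]

theorem Orthonormal.isGreatest_sqrt_sum_norm_inner_sq_div {v : ι → E} (hv : Orthonormal 𝕜 v)
    {σ : ι → ℝ} {s : Finset ι} (hs : s.Nonempty) (hσ : ∀ k ∈ s, 0 < σ k) :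
    IsGreatest {r : ℝ | ∃ y : E, ‖y‖ = 1 ∧ r = √(∑ k ∈ s, ‖⟪v k, y⟫_𝕜‖ ^ 2 / σ k)}
      (√(s.inf' hs σ))⁻¹ := by
  classical
  obtain ⟨k₀, hk₀s, hk₀⟩ := s.exists_mem_eq_inf' hs σ
  have hmin_pos : 0 < s.inf' hs σ := hk₀ ▸ hσ k₀ hk₀s
  rw [← Real.sqrt_inv]
  refine ⟨⟨v k₀, hv.1 k₀, ?_⟩, ?_⟩
  · rw [Finset.sum_eq_single_of_mem k₀ hk₀s fun k _ hk => by simp [orthonormal_iff_ite.mp hv, hk],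
      inner_self_eq_norm_sq_to_K, hv.1 k₀, hk₀]
    simp
  · rintro r ⟨y, hy, rfl⟩
    refine Real.sqrt_le_sqrt ?_
    calc ∑ k ∈ s, ‖⟪v k, y⟫_𝕜‖ ^ 2 / σ k
        ≤ ∑ k ∈ s, ‖⟪v k, y⟫_𝕜‖ ^ 2 / s.inf' hs σ :=
          Finset.sum_le_sum fun k hk =>
            div_le_div_of_nonneg_left (by positivity) hmin_pos (s.inf'_le σ hk)
      _ = (∑ k ∈ s, ‖⟪v k, y⟫_𝕜‖ ^ 2) / s.inf' hs σ := (Finset.sum_div ..).symm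
      _ ≤ ‖y‖ ^ 2 / s.inf' hs σ := by gcongr; exact hv.sum_inner_products_le y
      _ = (s.inf' hs σ)⁻¹ := by rw [hy, one_pow, one_div]

end

theorem stmt_15_general {H : Type*} [NormedAddCommGroup H] [InnerProductSpace ℂ H]
    {N : ℕ} (hN : 0 < N) (φ : Fin N → H)
    (G : Matrix (Fin N) (Fin N) ℂ) (hGdef : ∀ n m, G n m = ⟪φ n, φ m⟫_ℂ)
    (σ : Fin N → ℝ) (hσ : ∀ k, 0 < σ k)
    (v : Fin N → EuclideanSpace ℂ (Fin N)) (hv : Orthonormal ℂ v)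
    (heig : ∀ k, Matrix.toEuclideanCLM (𝕜 := ℂ) G (v k) = (σ k : ℂ) • v k)
    (ξ : Fin N → H) (hξ : ∀ k, ξ k = ∑ n, v k n • φ n)
    (ε : ℝ) (hε : 0 < ε)
    (hne : (Finset.univ.filter (fun k => ε < σ k)).Nonempty) :
    IsGreatest {r : ℝ | ∃ y : EuclideanSpace ℂ (Fin N), ‖y‖ = 1 ∧
        r = ‖∑ k ∈ Finset.univ.filter (fun k => ε < σ k),
          ((σ k : ℂ)⁻¹ * ⟪v k, y⟫_ℂ) • ξ k‖}
      (Real.sqrt ((Finset.univ.filter (fun k => ε < σ k)).inf' hne σ))⁻¹ ∧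
    (Real.sqrt ((Finset.univ.filter (fun k => ε < σ k)).inf' hne σ))⁻¹ ≤
      min (Real.sqrt (Finset.univ.inf' (Finset.univ_nonempty_iff.mpr (Fin.pos_iff_nonempty.mp hN)) σ))⁻¹
        (Real.sqrt ε)⁻¹ := by
  have hG : G = Matrix.gram ℂ φ := Matrix.ext hGdef
  have hξξ : ∀ j k, ⟪ξ j, ξ k⟫_ℂ = if j = k then (σ k : ℂ) else 0 := fun j k => by
    rw [hξ, hξ, inner_sum_smul_eq_inner_toEuclideanCLM_gram, ← hG]
    exact hv.inner_eq_ite_of_apply_eq_smul heig j k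
  have hnorm : ∀ y : EuclideanSpace ℂ (Fin N),
      ‖∑ k ∈ Finset.univ.filter (fun k => ε < σ k), ((σ k : ℂ)⁻¹ * ⟪v k, y⟫_ℂ) • ξ k‖ =
        √(∑ k ∈ Finset.univ.filter (fun k => ε < σ k), ‖⟪v k, y⟫_ℂ‖ ^ 2 / σ k) := fun y => by
    rw [← Real.sqrt_sq (norm_nonneg _), norm_sum_smul_sq_of_inner_eq_ite hξξ]
    congr 1
    refine Finset.sum_congr rfl fun k _ => ?_
    rw [norm_mul, mul_pow, norm_inv, Complex.norm_real, Real.norm_eq_abs, inv_pow, sq_abs]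
    field_simp [(hσ k).ne']
  simp_rw [hnorm]
  refine ⟨hv.isGreatest_sqrt_sum_norm_inner_sq_div hne fun k _ => hσ k, le_min ?_ ?_⟩
  · refine inv_anti₀ (Real.sqrt_pos.mpr ((Finset.lt_inf'_iff _).mpr fun k _ => hσ k)) ?_
    exact Real.sqrt_le_sqrt (Finset.inf'_mono σ (Finset.subset_univ _) hne)
  · refine inv_anti₀ (Real.sqrt_pos.mpr hε) (Real.sqrt_le_sqrt ?_)
    exact Finset.le_inf' hne σ fun k hk => (Finset.mem_filter.mp hk).2.le

/-- Condition number of the regularized frame approximation map `y ↦ T_N (G_N^ε)† y`: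
its absolute condition number is `κ = 1/√(min{σ_k : σ_k > ε})`, and hence
`κ ≤ min{1/√σ_min(G_N), 1/√ε}`. -/
theorem stmt_15 {H : Type*} [NormedAddCommGroup H] [InnerProductSpace ℂ H]
    {N : ℕ} (hN : 0 < N) (φ : Fin N → H) (hφ : LinearIndependent ℂ φ)
    (T : EuclideanSpace ℂ (Fin N) →ₗ[ℂ] H)
    (hT : ∀ x : EuclideanSpace ℂ (Fin N), T x = ∑ n, x n • φ n)
    (G : Matrix (Fin N) (Fin N) ℂ) (hGdef : ∀ n m, G n m = ⟪φ n, φ m⟫_ℂ)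
    (σ : Fin N → ℝ) (hσ : ∀ k, 0 < σ k)
    (v : Fin N → EuclideanSpace ℂ (Fin N)) (hv : Orthonormal ℂ v)
    (heig : ∀ k, Matrix.toEuclideanCLM (𝕜 := ℂ) G (v k) = (σ k : ℂ) • v k)
    (ξ : Fin N → H) (hξ : ∀ k, ξ k = ∑ n, v k n • φ n)
    (ε : ℝ) (hε : 0 < ε)
    (hne : (Finset.univ.filter (fun k => ε < σ k)).Nonempty) :
    IsGreatest {r : ℝ | ∃ y : EuclideanSpace ℂ (Fin N), ‖y‖ = 1 ∧
        r = ‖∑ k ∈ Finset.univ.filter (fun k => ε < σ k),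
          ((σ k : ℂ)⁻¹ * ⟪v k, y⟫_ℂ) • ξ k‖}
      (Real.sqrt ((Finset.univ.filter (fun k => ε < σ k)).inf' hne σ))⁻¹ ∧
    (Real.sqrt ((Finset.univ.filter (fun k => ε < σ k)).inf' hne σ))⁻¹ ≤
      min (Real.sqrt (Finset.univ.inf' (Finset.univ_nonempty_iff.mpr (Fin.pos_iff_nonempty.mp hN)) σ))⁻¹
        (Real.sqrt ε)⁻¹ :=
  stmt_15_general hN φ G hGdef σ hσ v hv heig ξ hξ ε hε hne
end
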